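/- arXiv:1410.5015 — 2 statements merged into one kernel-verified Lean document; each statement's English description precedes it below -/
import Mathlib

section
/- Let Γ be a finite tree and let Γ_1 and Γ_2 be subtrees of Γ whose union is Γ and whose intersection is the single vertex A (they share the vertex A and no other vertex and no edge). Then z^0(Γ, A) = z^0(Γ_1, A) · z^0(Γ_2, A). -/
open SimpleGraph

/-- `F` is the edge set of a rooted subtree (a connected subgraph containing the root `A`,
determined by its edge set) of the graph `G`. -/
def IsRootedSubtree {V : Type*} (G : SimpleGraph V) (A : V) (F : Set (Sym2 V)) : Prop :=
  F ⊆ G.edgeSet ∧ ∀ v : V, (∃ e ∈ F, v ∈ e) → (SimpleGraph.fromEdgeSet F).Reachable A v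

-- `z⁰(G, A) = Σ_{Γ'} (-1)^{|E(Γ')|}`, the sum running over all rooted subtrees `Γ'` of `G`
-- with root `A`, including the single-vertex subtree with empty edge set.
open scoped Classical in
noncomputable def z0 {V : Type*} [Fintype V] [DecidableEq V]
    (G : SimpleGraph V) (A : V) : ℤ :=
  ∑ F : Finset (Sym2 V), if IsRootedSubtree G A ↑F then (-1 : ℤ) ^ F.card else 0

/-!
A rooted subtree `F` of `G₁ ⊔ G₂` splits into `F ∩ E(G₁)` and `F ∩ E(G₂)`, which are rooted
subtrees of `G₁` and `G₂`: the unique path in the acyclic graph from `A` to a vertex of `Gᵢ`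
is the path inside `Gᵢ`. Conversely the union of rooted subtrees of `G₁` and `G₂` is a rooted
subtree of `G₁ ⊔ G₂`. As the edge sets are disjoint, this bijection adds edge counts, so the
signed sum defining `z⁰` factors.
-/

open Finset

namespace Finset

variable {α : Type*} [DecidableEq α] {s t : Set α} [DecidablePred (· ∈ s)] [DecidablePred (· ∈ t)]

theorem filter_mem_union_filter_mem {F : Finset α} (h : ↑F ⊆ s ∪ t) :
    F.filter (· ∈ s) ∪ F.filter (· ∈ t) = F := by
  rw [← filter_or]
  exact filter_true_of_mem fun x hx => h hx

omit [DecidablePred (· ∈ t)] in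
theorem filter_mem_union_of_subset (hst : Disjoint s t) {F₁ F₂ : Finset α}
    (h₁ : ↑F₁ ⊆ s) (h₂ : ↑F₂ ⊆ t) : (F₁ ∪ F₂).filter (· ∈ s) = F₁ := by
  rw [filter_union, filter_true_of_mem fun x hx => h₁ hx,
    filter_false_of_mem fun x hx => hst.notMem_of_mem_right (h₂ hx), union_empty]

end Finset

section

variable {V : Type*}

namespace SimpleGraph

theorem mem_support_of_mem_edgeSet {G : SimpleGraph V} {e : Sym2 V} {v : V}
    (he : e ∈ G.edgeSet) (hv : v ∈ e) : v ∈ G.support :=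
  Set.mem_sym2_iff_subset.mp (edgeSet_subset_sym2_iff.mpr subset_rfl he) hv

theorem IsAcyclic.edges_eq_of_isPath {G H₁ H₂ : SimpleGraph V} (hG : G.IsAcyclic)
    (h₁ : H₁ ≤ G) (h₂ : H₂ ≤ G) {u v : V} {p : H₁.Walk u v} {q : H₂.Walk u v}
    (hp : p.IsPath) (hq : q.IsPath) : p.edges = q.edges := by
  have := (hG.subsingleton_path u v).elim ⟨p.mapLe h₁, hp.mapLe h₁⟩ ⟨q.mapLe h₂, hq.mapLe h₂⟩
  simpa using congrArg (fun r : G.Path u v => r.1.edges) this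

end SimpleGraph

theorem IsRootedSubtree.sup {G₁ G₂ : SimpleGraph V} {A : V} {s t : Set (Sym2 V)}
    (hs : IsRootedSubtree G₁ A s) (ht : IsRootedSubtree G₂ A t) :
    IsRootedSubtree (G₁ ⊔ G₂) A (s ∪ t) := by
  refine ⟨edgeSet_sup G₁ G₂ ▸ Set.union_subset_union hs.1 ht.1, ?_⟩
  rintro v ⟨e, he | he, hv⟩
  · exact (hs.2 v ⟨e, he, hv⟩).mono (fromEdgeSet_mono Set.subset_union_left)
  · exact (ht.2 v ⟨e, he, hv⟩).mono (fromEdgeSet_mono Set.subset_union_right)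

theorem IsRootedSubtree.inter_edgeSet {G H : SimpleGraph V} {A : V} {F : Set (Sym2 V)}
    (hF : IsRootedSubtree G A F) (hG : G.IsAcyclic) (hHG : H ≤ G)
    (hH : ∀ w ∈ H.support, H.Reachable A w) : IsRootedSubtree H A (F ∩ H.edgeSet) := by
  refine ⟨Set.inter_subset_right, ?_⟩
  rintro v ⟨e, ⟨heF, heH⟩, hv⟩
  obtain ⟨q, hq⟩ := (hH v (mem_support_of_mem_edgeSet heH hv)).exists_isPath
  obtain ⟨p, hp⟩ := (hF.2 v ⟨e, heF, hv⟩).exists_isPath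
  have hFG : fromEdgeSet F ≤ G := by simpa using Set.sdiff_subset.trans hF.1
  have hpq : p.edges = q.edges := hG.edges_eq_of_isPath hFG hHG hp hq
  refine ⟨p.transfer _ fun e' he' => ?_⟩
  have heF' := p.edges_subset_edgeSet he'
  rw [edgeSet_fromEdgeSet] at heF' ⊢
  exact ⟨⟨heF'.1, q.edges_subset_edgeSet (hpq ▸ he')⟩, heF'.2⟩

section RootedSubtrees

variable [Fintype V] [DecidableEq V]

open scoped Classical in
noncomputable def rootedSubtrees (G : SimpleGraph V) (A : V) : Finset (Finset (Sym2 V)) :=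
  {F | IsRootedSubtree G A ↑F}

omit [DecidableEq V] in
@[simp]
theorem mem_rootedSubtrees {G : SimpleGraph V} {A : V} {F : Finset (Sym2 V)} :
    F ∈ rootedSubtrees G A ↔ IsRootedSubtree G A ↑F := by
  simp [rootedSubtrees]

theorem z0_eq_sum_rootedSubtrees (G : SimpleGraph V) (A : V) :
    z0 G A = ∑ F ∈ rootedSubtrees G A, (-1 : ℤ) ^ #F := by
  rw [z0, rootedSubtrees, sum_filter]

theorem z0_sup_eq_mul {G₁ G₂ : SimpleGraph V} {A : V} (hG : (G₁ ⊔ G₂).IsAcyclic)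
    (hdisj : Disjoint G₁.edgeSet G₂.edgeSet)
    (hconn₁ : ∀ w ∈ G₁.support, G₁.Reachable A w)
    (hconn₂ : ∀ w ∈ G₂.support, G₂.Reachable A w) :
    z0 (G₁ ⊔ G₂) A = z0 G₁ A * z0 G₂ A := by
  classical
  simp only [z0_eq_sum_rootedSubtrees, sum_mul_sum, ← pow_add]
  rw [← sum_product' (f := fun F₁ F₂ : Finset (Sym2 V) => (-1 : ℤ) ^ (#F₁ + #F₂))]
  symm
  refine sum_nbij' (fun p => p.1 ∪ p.2)
    (fun F => (F.filter (· ∈ G₁.edgeSet), F.filter (· ∈ G₂.edgeSet))) ?_ ?_ ?_ ?_ ?_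
  · rintro ⟨F₁, F₂⟩ hp
    simp only [mem_product, mem_rootedSubtrees] at hp ⊢
    simpa using hp.1.sup hp.2
  · intro F hF
    simp only [mem_product, mem_rootedSubtrees, coe_filter] at hF ⊢
    exact ⟨hF.inter_edgeSet hG le_sup_left hconn₁, hF.inter_edgeSet hG le_sup_right hconn₂⟩
  · rintro ⟨F₁, F₂⟩ hp
    simp only [mem_product, mem_rootedSubtrees] at hp
    rw [filter_mem_union_of_subset hdisj hp.1.1 hp.2.1, union_comm,
      filter_mem_union_of_subset hdisj.symm hp.2.1 hp.1.1]
  · intro F hF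
    exact filter_mem_union_filter_mem ((mem_rootedSubtrees.mp hF).1.trans (edgeSet_sup _ _).le)
  · rintro ⟨F₁, F₂⟩ hp
    simp only [mem_product, mem_rootedSubtrees] at hp
    rw [card_union_of_disjoint (disjoint_coe.mp (hdisj.mono hp.1.1 hp.2.1))]

end RootedSubtrees

end

theorem z0_union_eq_mul_general {V : Type*} [Fintype V] [DecidableEq V]
    (G G₁ G₂ : SimpleGraph V) (A : V)
    (hG : G.IsTree)
    (hunion : G₁ ⊔ G₂ = G)
    (hedge_disj : G₁.edgeSet ∩ G₂.edgeSet = ∅)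
    (hconn₁ : ∀ w ∈ G₁.support, G₁.Reachable A w)
    (hconn₂ : ∀ w ∈ G₂.support, G₂.Reachable A w) :
    z0 G A = z0 G₁ A * z0 G₂ A := by
  subst hunion
  exact z0_sup_eq_mul hG.isAcyclic (Set.disjoint_iff_inter_eq_empty.mpr hedge_disj) hconn₁ hconn₂

/-- if a finite tree `G` is the union of two subtrees `G₁`, `G₂` that intersect
exactly in the single vertex `A` (they share the vertex `A` and no other vertex and no edge),
then `z⁰(G, A) = z⁰(G₁, A) * z⁰(G₂, A)`. -/
theorem z0_union_eq_mul {V : Type*} [Fintype V] [DecidableEq V]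
    (G G₁ G₂ : SimpleGraph V) (A : V)
    (hG : G.IsTree)
    (h₁ : G₁ ≤ G) (h₂ : G₂ ≤ G)
    (hunion : G₁ ⊔ G₂ = G)
    (hedge_disj : G₁.edgeSet ∩ G₂.edgeSet = ∅)
    (hvert : G₁.support ∩ G₂.support ⊆ {A})
    (hconn₁ : ∀ w ∈ G₁.support, G₁.Reachable A w)
    (hconn₂ : ∀ w ∈ G₂.support, G₂.Reachable A w) :
    z0 G A = z0 G₁ A * z0 G₂ A :=
  z0_union_eq_mul_general G G₁ G₂ A hG hunion hedge_disj hconn₁ hconn₂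
end

section
/- Let Γ_H be the H-shaped tree with positive travel times t_1,…,t_5. Then there exists a constant C such that for all real T ≥ 0: B(Γ_H, A, T) = W(2t_1,2t_3,2t_4,2t_5;T) + W(2t_2,2t_3,2t_4,2t_5;T) − W(2t_1,2t_4,2t_5;T) − W(2t_2,2t_4,2t_5;T) + W(2t_1,2t_2;T) + W(2t_1;T) + W(2t_2;T) + C. -/
open SimpleGraph

-- `B(G, A, T)`: the sum, over all pairs `(Γ', n)` where `Γ'` is a rooted subtree (root `A`)
-- with nonempty edge set `F` and `n` assigns a positive integer to every edge of `Γ'` with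
-- `∑_{e ∈ F} 2 n_e t_e ≤ T`, of the weight `deg A - r(Γ')`, where `r(Γ')` is the number of
-- edges of `Γ'` incident to `A` (the number of new points born at `A` up to time `T`).
open scoped Classical in
noncomputable def Bcount {V : Type*} [Fintype V] [DecidableEq V]
    (G : SimpleGraph V) (A : V) (t : Sym2 V → ℝ) (T : ℝ) : ℤ :=
  ∑ F : Finset (Sym2 V),
    if IsRootedSubtree G A ↑F ∧ F.Nonempty then
      ((Nat.card {w : V | G.Adj A w} : ℤ) - ((F.filter (fun e => A ∈ e)).card : ℤ)) *
        (Nat.card {n : Sym2 V → ℕ |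
          (∀ e ∈ F, 1 ≤ n e) ∧ (∀ e ∉ F, n e = 0) ∧
          ∑ e ∈ F, (n e : ℝ) * (2 * t e) ≤ T} : ℤ)
    else 0

/-- `W(s₁, …, s_m; T)`: the number of `m`-tuples of nonnegative integers `(n₁, …, n_m)` with
`s₁ n₁ + ⋯ + s_m n_m ≤ T`. -/
noncomputable def W {m : ℕ} (s : Fin m → ℝ) (T : ℝ) : ℕ :=
  Nat.card {n : Fin m → ℕ | ∑ i, (n i : ℝ) * s i ≤ T}

/-- The H-shaped tree `Γ_H`: inner vertices `A = 0` and `B = 1`; pendant edges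
`e₁ = s(0,2)`, `e₂ = s(0,3)` at `A`; the jumper `e₃ = s(0,1)`; pendant edges
`e₄ = s(1,4)`, `e₅ = s(1,5)` at `B`. -/
def GammaH : SimpleGraph (Fin 6) :=
  SimpleGraph.fromEdgeSet {s(0, 2), s(0, 3), s(0, 1), s(1, 4), s(1, 5)}

/-!
Splitting lattice points by their support, `W(s; T)` is the sum over all subsets `I` of the
coordinates of the number of points `n` with support exactly `I` and `∑ nᵢ sᵢ ≤ T`; the
summands of `B(Γ, A, T)` are exactly such numbers, for the edge sets of rooted subtrees. The
rooted subtrees of `Γ_H` are the nonempty edge sets containing the jumper `e₃` whenever they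
contain `e₄` or `e₅`. Both sides of the formula thus become integer combinations of the same 32
counts, one for each set of edges, and comparing coefficients proves it; the empty edge set, which
contributes a single point, appears on the right-hand side with coefficient 3, whence `C = -3`.
-/

open Finset

section Counting

variable {α β : Type*}

noncomputable def positiveCount (w : α → ℝ) (F : Finset α) (T : ℝ) : ℕ :=
  Nat.card {n : α → ℕ | (∀ e ∈ F, 1 ≤ n e) ∧ (∀ e ∉ F, n e = 0) ∧ ∑ e ∈ F, (n e : ℝ) * w e ≤ T}

noncomputable def supportedCount (w : α → ℝ) (S : Finset α) (T : ℝ) : ℕ :=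
  Nat.card {n : α → ℕ | (∀ e ∉ S, n e = 0) ∧ ∑ e ∈ S, (n e : ℝ) * w e ≤ T}

theorem positiveCount_empty (w : α → ℝ) {T : ℝ} (hT : 0 ≤ T) : positiveCount w ∅ T = 1 := by
  rw [positiveCount, Nat.card_eq_one_iff_exists]
  exact ⟨⟨0, by simp [hT]⟩, fun n => Subtype.ext (funext fun e => n.2.2.1 e (notMem_empty e))⟩

theorem positiveCount_map (e : β ↪ α) (w : α → ℝ) (I : Finset β) (T : ℝ) :
    positiveCount w (I.map e) T = positiveCount (w ∘ e) I T := by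
  classical
  have hsum (n : α → ℕ) : ∑ a ∈ I.map e, (n a : ℝ) * w a = ∑ b ∈ I, (n (e b) : ℝ) * w (e b) :=
    sum_map _ _ _
  refine Nat.card_congr
    { toFun := fun n => ⟨n.1 ∘ e, fun b hb => n.2.1 _ (mem_map_of_mem e hb),
        fun b hb => n.2.2.1 _ (by rwa [mem_map' e]), (hsum n.1).symm.trans_le n.2.2.2⟩
      invFun := fun n => ⟨Function.extend e n.1 0, ?_, ?_, ?_⟩
      left_inv := fun n => Subtype.ext (funext fun a => ?_)
      right_inv := fun n => Subtype.ext (funext fun b => e.injective.extend_apply _ _ b) }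
  · intro a ha
    obtain ⟨b, hb, rfl⟩ := mem_map.1 ha
    simpa only [e.injective.extend_apply] using n.2.1 b hb
  · intro a ha
    by_cases hra : ∃ b, e b = a
    · obtain ⟨b, rfl⟩ := hra
      rw [e.injective.extend_apply]
      exact n.2.2.1 b fun hb => ha (mem_map_of_mem e hb)
    · exact Function.extend_apply' _ _ _ hra
  · simpa only [hsum, e.injective.extend_apply, Function.comp_apply] using n.2.2.2
  · by_cases hra : ∃ b, e b = a
    · obtain ⟨b, rfl⟩ := hra
      exact e.injective.extend_apply _ _ b
    · refine (Function.extend_apply' _ _ _ hra).trans (n.2.2.1 a fun ha => hra ?_).symm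
      obtain ⟨b, -, hb⟩ := mem_map.1 ha
      exact ⟨b, hb⟩

theorem finite_setOf_supported {w : α → ℝ} {S : Finset α} (hw : ∀ e ∈ S, 0 < w e) (T : ℝ) :
    {n : α → ℕ | (∀ e ∉ S, n e = 0) ∧ ∑ e ∈ S, (n e : ℝ) * w e ≤ T}.Finite := by
  classical
  refine ((Set.finite_Iic fun e : S => ⌈T / w e⌉₊).image
    fun x e => if h : e ∈ S then x ⟨e, h⟩ else 0).subset ?_
  rintro n ⟨hzero, hsum⟩
  refine ⟨fun e => n e, fun e => ?_, funext fun e => ?_⟩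
  · have hterm : (n e : ℝ) * w e ≤ T := (single_le_sum (f := fun e => (n e : ℝ) * w e)
      (fun e he => mul_nonneg (Nat.cast_nonneg _) (hw e he).le) e.2).trans hsum
    exact Nat.cast_le.1 ((le_div_iff₀ (hw e e.2)).2 hterm |>.trans (Nat.le_ceil _))
  · by_cases he : e ∈ S
    · simp [he]
    · simp [he, hzero e he]

theorem supportedCount_eq_sum_positiveCount [DecidableEq α] {w : α → ℝ} {S : Finset α}
    (hw : ∀ e ∈ S, 0 < w e) (T : ℝ) :
    supportedCount w S T = ∑ F ∈ S.powerset, positiveCount w F T := by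
  set A := {n : α → ℕ | (∀ e ∉ S, n e = 0) ∧ ∑ e ∈ S, (n e : ℝ) * w e ≤ T}
  have : Finite A := (finite_setOf_supported hw T).to_subtype
  let supp : A → S.powerset := fun n =>
    ⟨S.filter (n.1 · ≠ 0), mem_powerset.2 (filter_subset _ _)⟩
  have hfiber (F : S.powerset) : Nat.card {n : A // supp n = F} = positiveCount w F T := by
    obtain ⟨F, hF⟩ := F
    rw [mem_powerset] at hF
    refine Nat.card_congr (((Equiv.subtypeEquivRight fun _ => Subtype.ext_iff).trans
      (Equiv.subtypeSubtypeEquivSubtypeInter (· ∈ A) (fun n => S.filter (n · ≠ 0) = F))).trans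
      (Equiv.subtypeEquivRight fun n => ?_))
    have hsum (h : ∀ e ∈ S, e ∉ F → n e = 0) :
        ∑ e ∈ F, (n e : ℝ) * w e = ∑ e ∈ S, (n e : ℝ) * w e :=
      sum_subset hF fun e he heF => by simp [h e he heF]
    simp only [A, Set.mem_ofPred_eq, Finset.ext_iff, mem_filter]
    constructor
    · rintro ⟨⟨hzero, hle⟩, hsupp⟩
      have hzF : ∀ e ∉ F, n e = 0 := fun e heF => by
        by_cases he : e ∈ S
        · by_contra hne; exact heF ((hsupp e).1 ⟨he, hne⟩)
        · exact hzero e he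
      exact ⟨fun e he => Nat.one_le_iff_ne_zero.2 ((hsupp e).2 he).2, hzF,
        (hsum fun e _ => hzF e).le.trans hle⟩
    · rintro ⟨hpos, hzF, hle⟩
      refine ⟨⟨fun e he => hzF e fun heF => he (hF heF), (hsum fun e _ => hzF e) ▸ hle⟩,
        fun e => ⟨fun ⟨_, hne⟩ => by_contra fun heF => hne (hzF e heF),
          fun he => ⟨hF he, Nat.one_le_iff_ne_zero.1 (hpos e he)⟩⟩⟩
  rw [supportedCount, ← Nat.card_congr (Equiv.sigmaFiberEquiv supp), Nat.card_sigma,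
    ← sum_coe_sort S.powerset]
  exact Fintype.sum_congr _ _ hfiber

theorem W_comp_eq_sum_positiveCount [DecidableEq β] {m : ℕ} (j : Fin m ↪ β) {w : β → ℝ}
    (hw : ∀ i, 0 < w (j i)) (T : ℝ) :
    W (w ∘ j) T = ∑ J ∈ (univ.map j).powerset, positiveCount w J T := by
  have hW : W (w ∘ j) T = supportedCount (w ∘ j) univ T := by
    simp [W, supportedCount]
  rw [hW, supportedCount_eq_sum_positiveCount (w := w ∘ j) fun i _ => hw i, powerset_univ,
    map_eq_image, powerset_image, sum_image (image_injOn_powerset_of_injOn j.injective.injOn)]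
  exact sum_congr rfl fun I _ => by rw [← map_eq_image, positiveCount_map]

end Counting

theorem sum_powerset_eq_sum_boole_mul {α R : Type*} [Fintype α] [DecidableEq α]
    [NonAssocSemiring R] (S : Finset α) (g : Finset α → R) :
    ∑ F ∈ S.powerset, g F = ∑ F, (if F ⊆ S then 1 else 0) * g F := by
  simp_rw [boole_mul]
  rw [← sum_filter]
  congr 1
  ext F
  simp

theorem SimpleGraph.Reachable.mem_of_adj_closed {V : Type*} {G : SimpleGraph V} {S : Set V}
    (hS : ∀ u v, G.Adj u v → u ∈ S → v ∈ S) {u v : V} (h : G.Reachable u v) (hu : u ∈ S) :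
    v ∈ S := by
  rw [reachable_iff_reflTransGen] at h
  induction h with
  | refl => exact hu
  | tail _ hadj ih => exact hS _ _ hadj ih

/-- `edgeH k` is the edge `e_{k+1}` of `Γ_H`. -/
def edgeH : Fin 5 ↪ Sym2 (Fin 6) :=
  ⟨![s(0, 2), s(0, 3), s(0, 1), s(1, 4), s(1, 5)], by decide⟩

theorem edgeSet_GammaH : GammaH.edgeSet = ↑(univ.map edgeH) := by
  have h : univ.map edgeH = {s(0, 2), s(0, 3), s(0, 1), s(1, 4), s(1, 5)} := by decide
  rw [h, GammaH, edgeSet_fromEdgeSet]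
  ext e
  simp only [Set.mem_sdiff, Set.mem_insert_iff, Set.mem_singleton_iff, coe_insert,
    coe_singleton]
  revert e
  decide

theorem card_adj_GammaH : Nat.card {w | GammaH.Adj 0 w} = 3 := by
  have h : {w | GammaH.Adj 0 w} = (({1, 2, 3} : Finset (Fin 6)) : Set (Fin 6)) := by
    ext w
    rw [GammaH, Set.mem_ofPred_eq, fromEdgeSet_adj]
    simp only [Set.mem_insert_iff, Set.mem_singleton_iff, coe_insert, coe_singleton]
    revert w
    decide
  rw [h, Nat.card_coe_set_eq, Set.ncard_coe_finset]
  rfl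

theorem isRootedSubtree_GammaH_map_iff (I : Finset (Fin 5)) :
    IsRootedSubtree GammaH 0 ↑(I.map edgeH) ↔ (3 ∈ I ∨ 4 ∈ I → 2 ∈ I) := by
  have adj {k : Fin 5} (hk : k ∈ I) {a b : Fin 6} (hab : edgeH k = s(a, b)) (hne : a ≠ b) :
      (fromEdgeSet (↑(I.map edgeH) : Set (Sym2 (Fin 6)))).Adj a b :=
    (fromEdgeSet_adj _).2 ⟨hab ▸ mem_map_of_mem edgeH hk, hne⟩
  rw [IsRootedSubtree, edgeSet_GammaH, coe_subset]
  refine (and_iff_right (map_subset_map.2 (subset_univ I))).trans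
    ⟨fun hreach hB => ?_, fun hjump v ⟨e, he, hv⟩ => ?_⟩
  · -- without the jumper `edgeH 2`, no edge leaves the vertex set `{0, 2, 3}`
    by_contra h2
    have key : ∀ k : Fin 5, k ≠ 2 → ∀ u v : Fin 6, edgeH k = s(u, v) →
        u ∈ ({0, 2, 3} : Finset (Fin 6)) → v ∈ ({0, 2, 3} : Finset (Fin 6)) := by
      decide
    have hclosed : ∀ u v, (fromEdgeSet (↑(I.map edgeH) : Set (Sym2 (Fin 6)))).Adj u v →
        u ∈ (({0, 2, 3} : Finset (Fin 6)) : Set (Fin 6)) →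
        v ∈ (({0, 2, 3} : Finset (Fin 6)) : Set (Fin 6)) := by
      intro u v huv
      obtain ⟨k, hk, hkuv⟩ := mem_map.1 huv.1
      exact key k (fun h => h2 (h ▸ hk)) u v hkuv
    have hinner (k : Fin 5) (hk : k ∈ I) (v : Fin 6) (hv : v ∈ edgeH k) :
        v ∈ ({0, 2, 3} : Finset (Fin 6)) :=
      (hreach v ⟨_, mem_map_of_mem edgeH hk, hv⟩).mem_of_adj_closed hclosed (by decide)
    rcases hB with h | h
    · exact absurd (hinner 3 h 4 (by decide)) (by decide)
    · exact absurd (hinner 4 h 5 (by decide)) (by decide)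
  · obtain ⟨k, hk, rfl⟩ := mem_map.1 he
    -- each endpoint is `0`, adjacent to `0`, or adjacent to `1`, reached through the jumper
    fin_cases k <;> rcases Sym2.mem_iff.1 hv with rfl | rfl
    all_goals first
      | exact Reachable.refl _
      | exact (adj hk rfl (by decide)).reachable
      | exact (adj (hjump (.inl hk)) rfl (by decide)).reachable.trans
          (adj hk rfl (by decide)).reachable
      | exact (adj (hjump (.inr hk)) rfl (by decide)).reachable.trans
          (adj hk rfl (by decide)).reachable
      | exact (adj (hjump (.inl hk)) rfl (by decide)).reachable
      | exact (adj (hjump (.inr hk)) rfl (by decide)).reachable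

open scoped Classical in
theorem Bcount_eq_sum_positiveCount {V : Type*} [Fintype V] [DecidableEq V] (G : SimpleGraph V)
    (A : V) (t : Sym2 V → ℝ) (T : ℝ) :
    Bcount G A t T = ∑ F : Finset (Sym2 V),
      if IsRootedSubtree G A ↑F ∧ F.Nonempty then
        ((Nat.card {w : V | G.Adj A w} : ℤ) - #{e ∈ F | A ∈ e}) *
          positiveCount (fun e => 2 * t e) F T
      else 0 :=
  rfl

theorem Bcount_GammaH (t : Sym2 (Fin 6) → ℝ) (T : ℝ) :
    Bcount GammaH 0 t T = ∑ I : Finset (Fin 5),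
      if (3 ∈ I ∨ 4 ∈ I → 2 ∈ I) ∧ I.Nonempty then
        (3 - #{k ∈ I | 0 ∈ edgeH k} : ℤ) * positiveCount (fun k => 2 * t (edgeH k)) I T
      else 0 := by
  rw [Bcount_eq_sum_positiveCount, card_adj_GammaH,
    ← sum_subset (subset_univ (univ.map (mapEmbedding edgeH).toEmbedding)), sum_map]
  · refine sum_congr rfl fun I _ => ?_
    simp only [RelEmbedding.coe_toEmbedding, mapEmbedding_apply, isRootedSubtree_GammaH_map_iff,
      map_nonempty, filter_map, card_map, positiveCount_map]
    rfl
  · intro F _ hF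
    rw [if_neg]
    rintro ⟨⟨hsub, -⟩, -⟩
    rw [edgeSet_GammaH, coe_subset, subset_map_iff] at hsub
    obtain ⟨I, -, rfl⟩ := hsub
    exact hF (mem_map_of_mem _ (mem_univ I))

theorem sum_rootedSubtrees_GammaH (g : Finset (Fin 5) → ℤ) :
    (∑ I : Finset (Fin 5),
      if (3 ∈ I ∨ 4 ∈ I → 2 ∈ I) ∧ I.Nonempty then (3 - #{k ∈ I | 0 ∈ edgeH k} : ℤ) * g I
      else 0) + 3 * g ∅ =
    ∑ I ∈ ({0, 2, 3, 4} : Finset (Fin 5)).powerset, g I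
      + ∑ I ∈ ({1, 2, 3, 4} : Finset (Fin 5)).powerset, g I
      - ∑ I ∈ ({0, 3, 4} : Finset (Fin 5)).powerset, g I
      - ∑ I ∈ ({1, 3, 4} : Finset (Fin 5)).powerset, g I
      + ∑ I ∈ ({0, 1} : Finset (Fin 5)).powerset, g I
      + ∑ I ∈ ({0} : Finset (Fin 5)).powerset, g I
      + ∑ I ∈ ({1} : Finset (Fin 5)).powerset, g I := by
  have hempty : g ∅ = ∑ I, (if I = ∅ then 1 else 0) * g I := by
    simp only [boole_mul, sum_ite_eq', mem_univ, if_true]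
  have hcoef : ∀ I : Finset (Fin 5),
      (if (3 ∈ I ∨ 4 ∈ I → 2 ∈ I) ∧ I.Nonempty then (3 - #{k ∈ I | 0 ∈ edgeH k} : ℤ) else 0)
        + 3 * (if I = ∅ then 1 else 0) =
      (if I ⊆ {0, 2, 3, 4} then 1 else 0) + (if I ⊆ {1, 2, 3, 4} then 1 else 0)
        - (if I ⊆ {0, 3, 4} then 1 else 0) - (if I ⊆ {1, 3, 4} then 1 else 0)
        + (if I ⊆ {0, 1} then 1 else 0) + (if I ⊆ {0} then 1 else 0)
        + (if I ⊆ {1} then 1 else 0) := by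
    decide
  simp only [sum_powerset_eq_sum_boole_mul, hempty, ← ite_zero_mul, mul_sum, ← sum_add_distrib,
    ← sum_sub_distrib]
  exact sum_congr rfl fun I _ => by linear_combination g I * hcoef I

/-- for the H-shaped tree `Γ_H` with positive travel times `t₁, …, t₅` there is a
constant `C` such that for all `T ≥ 0`,
`B(Γ_H, A, T) = W(2t₁,2t₃,2t₄,2t₅;T) + W(2t₂,2t₃,2t₄,2t₅;T) − W(2t₁,2t₄,2t₅;T)
  − W(2t₂,2t₄,2t₅;T) + W(2t₁,2t₂;T) + W(2t₁;T) + W(2t₂;T) + C`. -/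
theorem Bcount_GammaH_A (t₁ t₂ t₃ t₄ t₅ : ℝ)
    (h₁ : 0 < t₁) (h₂ : 0 < t₂) (h₃ : 0 < t₃) (h₄ : 0 < t₄) (h₅ : 0 < t₅)
    (t : Sym2 (Fin 6) → ℝ)
    (he₁ : t s(0, 2) = t₁) (he₂ : t s(0, 3) = t₂) (he₃ : t s(0, 1) = t₃)
    (he₄ : t s(1, 4) = t₄) (he₅ : t s(1, 5) = t₅) :
    ∃ C : ℤ, ∀ T : ℝ, 0 ≤ T →
      Bcount GammaH 0 t T =
        (W ![2*t₁, 2*t₃, 2*t₄, 2*t₅] T : ℤ) + (W ![2*t₂, 2*t₃, 2*t₄, 2*t₅] T : ℤ)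
          - (W ![2*t₁, 2*t₄, 2*t₅] T : ℤ) - (W ![2*t₂, 2*t₄, 2*t₅] T : ℤ)
          + (W ![2*t₁, 2*t₂] T : ℤ) + (W ![2*t₁] T : ℤ) + (W ![2*t₂] T : ℤ) + C := by
  subst he₁ he₂ he₃ he₄ he₅
  refine ⟨-3, fun T hT => ?_⟩
  rw [Bcount_GammaH]
  set w : Fin 5 → ℝ := fun k => 2 * t (edgeH k)
  have hw (k : Fin 5) : 0 < w k := by
    fin_cases k <;> exact mul_pos two_pos ‹_›
  have hW {m : ℕ} (j : Fin m ↪ Fin 5) (S : Finset (Fin 5)) (hS : univ.map j = S) {s : Fin m → ℝ}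
      (hs : s = w ∘ j) : (W s T : ℤ) = ∑ I ∈ S.powerset, (positiveCount w I T : ℤ) := by
    subst hS hs
    exact_mod_cast W_comp_eq_sum_positiveCount j (fun i => hw (j i)) T
  rw [hW ⟨![0, 2, 3, 4], by decide⟩ {0, 2, 3, 4} (by decide) ?_,
    hW ⟨![1, 2, 3, 4], by decide⟩ {1, 2, 3, 4} (by decide) ?_,
    hW ⟨![0, 3, 4], by decide⟩ {0, 3, 4} (by decide) ?_,
    hW ⟨![1, 3, 4], by decide⟩ {1, 3, 4} (by decide) ?_,
    hW ⟨![0, 1], by decide⟩ {0, 1} (by decide) ?_,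
    hW ⟨![0], by decide⟩ {0} (by decide) ?_, hW ⟨![1], by decide⟩ {1} (by decide) ?_]
  · have h := sum_rootedSubtrees_GammaH fun I => (positiveCount w I T : ℤ)
    rw [positiveCount_empty w hT, Nat.cast_one] at h
    linear_combination h
  -- the deferred goals `s = w ∘ j` identify each weight vector of the statement
  all_goals ext i; fin_cases i <;> rfl
end
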